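/- Suppose there exist two nonzero mutually orthogonal subspaces S₁, S₂ of ℂ^N each invariant under the dynamics, i.e., for every t ≥ 0 and every density matrix ρ with supp(ρ) ⊆ Sᵢ one has supp(exp(t𝓛)(ρ)) ⊆ Sᵢ. Then the system has no globally asymptotically stable equilibrium: there is no steady state ρ_ss such that exp(t𝓛)(ρ₀) → ρ_ss as t → ∞ for every density matrix ρ₀. -/

import Mathlib

open Matrix
open scoped ComplexOrder

attribute [local instance] Matrix.normedAddCommGroup Matrix.normedSpace

/-- The Lindblad generator `𝓛(ρ) = -i[H,ρ] + Σ_d (V_d ρ V_d† - ½(V_d† V_d ρ + ρ V_d† V_d))`,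
as a `ℂ`-linear endomorphism of the matrix space. -/
noncomputable def lindbladOp {n : Type*} [Fintype n] [DecidableEq n] {ι : Type*} [Fintype ι]
    (H : Matrix n n ℂ) (V : ι → Matrix n n ℂ) :
    Matrix n n ℂ →ₗ[ℂ] Matrix n n ℂ where
  toFun ρ := -Complex.I • (H * ρ - ρ * H) +
    ∑ d, (V d * ρ * (V d)ᴴ - (1 / 2 : ℂ) • ((V d)ᴴ * V d * ρ + ρ * ((V d)ᴴ * V d)))
  map_add' x y := by
    simp only [mul_add, add_mul, smul_add, sub_eq_add_neg, neg_add,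
      Finset.sum_add_distrib, Finset.sum_neg_distrib]
    abel
  map_smul' c x := by
    simp only [Matrix.mul_smul, Matrix.smul_mul, smul_sub, smul_add, Finset.smul_sum,
      smul_comm c, RingHom.id_apply]

/-- A density matrix: positive semidefinite with trace one. -/
def IsDensityMatrix {n : Type*} [Fintype n] (ρ : Matrix n n ℂ) : Prop :=
  ρ.PosSemidef ∧ ρ.trace = 1

/-- A steady state of the Lindblad dynamics. -/
noncomputable def IsSteadyState {n : Type*} [Fintype n] [DecidableEq n] {ι : Type*} [Fintype ι]
    (H : Matrix n n ℂ) (V : ι → Matrix n n ℂ) (ρ : Matrix n n ℂ) : Prop :=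
  IsDensityMatrix ρ ∧ lindbladOp H V ρ = 0

/-- The support of a matrix: its range as a linear map `ℂ^N → ℂ^N`. -/
noncomputable def matSupport {n : Type*} [Fintype n] (ρ : Matrix n n ℂ) :
    Submodule ℂ (n → ℂ) :=
  LinearMap.range ρ.mulVecLin

/-- Time evolution `ρ(t) = exp(t𝓛)(ρ₀)`. -/
noncomputable def evolve {n : Type*} [Fintype n] [DecidableEq n] {ι : Type*} [Fintype ι]
    (H : Matrix n n ℂ) (V : ι → Matrix n n ℂ) (t : ℝ) (ρ : Matrix n n ℂ) : Matrix n n ℂ :=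
  letI : NormedRing (Matrix n n ℂ →L[ℂ] Matrix n n ℂ) := ContinuousLinearMap.toNormedRing
  letI : IsTopologicalRing (Matrix n n ℂ →L[ℂ] Matrix n n ℂ) :=
    @NonUnitalSeminormedRing.toIsTopologicalRing _ inferInstance
  NormedSpace.exp ((t : ℂ) • (LinearMap.toContinuousLinearMap (lindbladOp H V))) ρ

/-!
A density matrix supported in an invariant subspace stays supported there, and the matrices
supported in a subspace form a closed set, so a global attractor `ρss` is supported in both `S₁`
and `S₂`. Orthogonality then forces `ρss *ᵥ v` to be orthogonal to
itself, i.e. `ρss = 0`, contradicting `Tr ρss = 1`.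
-/

open Filter Topology

section Support

variable {n : Type*} [Fintype n]

lemma matSupport_le_iff {ρ : Matrix n n ℂ} {S : Submodule ℂ (n → ℂ)} :
    matSupport ρ ≤ S ↔ ∀ v, ρ *ᵥ v ∈ S := by
  rw [matSupport, LinearMap.range_eq_map, Submodule.map_le_iff_le_comap]
  simp [SetLike.le_def]

def supportedIn (S : Submodule ℂ (n → ℂ)) : Submodule ℂ (Matrix n n ℂ) where
  carrier := {ρ | matSupport ρ ≤ S}
  add_mem' {a b} ha hb := matSupport_le_iff.2 fun v => by
    rw [add_mulVec]; exact S.add_mem (matSupport_le_iff.1 ha v) (matSupport_le_iff.1 hb v)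
  zero_mem' := matSupport_le_iff.2 fun v => by rw [zero_mulVec]; exact S.zero_mem
  smul_mem' c {a} ha := matSupport_le_iff.2 fun v => by
    rw [smul_mulVec]; exact S.smul_mem c (matSupport_le_iff.1 ha v)

lemma matSupport_le_of_tendsto {α : Type*} {l : Filter α} [l.NeBot] {f : α → Matrix n n ℂ}
    {ρ : Matrix n n ℂ} {S : Submodule ℂ (n → ℂ)} (hf : Tendsto f l (𝓝 ρ))
    (hS : ∀ᶠ a in l, matSupport (f a) ≤ S) : matSupport ρ ≤ S :=
  (supportedIn S).closed_of_finiteDimensional.mem_of_tendsto hf hS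

lemma eq_zero_of_matSupport_le_of_orthogonal {ρ : Matrix n n ℂ} {S₁ S₂ : Submodule ℂ (n → ℂ)}
    (horth : ∀ x ∈ S₁, ∀ y ∈ S₂, star x ⬝ᵥ y = 0)
    (h₁ : matSupport ρ ≤ S₁) (h₂ : matSupport ρ ≤ S₂) : ρ = 0 := by
  classical
  refine ext_of_mulVec_single fun i => ?_
  rw [zero_mulVec]
  exact dotProduct_star_self_eq_zero.1 <|
    horth _ (matSupport_le_iff.1 h₁ _) _ (matSupport_le_iff.1 h₂ _)

lemma IsDensityMatrix.ne_zero {ρ : Matrix n n ℂ} (hρ : IsDensityMatrix ρ) : ρ ≠ 0 := by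
  rintro rfl
  simpa using hρ.2

lemma exists_isDensityMatrix_matSupport_le {S : Submodule ℂ (n → ℂ)} (hS : S ≠ ⊥) :
    ∃ ρ : Matrix n n ℂ, IsDensityMatrix ρ ∧ matSupport ρ ≤ S := by
  obtain ⟨x, hxS, hx⟩ := (Submodule.ne_bot_iff S).1 hS
  have hnorm : x ⬝ᵥ star x ≠ 0 := by
    rw [dotProduct_comm]; exact fun h => hx (dotProduct_star_self_eq_zero.1 h)
  have hnonneg : 0 ≤ x ⬝ᵥ star x := by
    rw [dotProduct_comm]; exact dotProduct_star_self_nonneg x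
  refine ⟨(x ⬝ᵥ star x)⁻¹ • vecMulVec x (star x),
    ⟨(posSemidef_vecMulVec_self_star x).smul (inv_nonneg_of_nonneg hnonneg), ?_⟩,
    matSupport_le_iff.2 fun v => ?_⟩
  · rw [trace_smul, trace_vecMulVec, smul_eq_mul, inv_mul_cancel₀ hnorm]
  · rw [smul_mulVec, vecMulVec_mulVec, op_smul_eq_smul]
    exact S.smul_mem _ (S.smul_mem _ hxS)

end Support

lemma matSupport_le_of_tendsto_evolve {n : Type*} [Fintype n] [DecidableEq n]
    {ι : Type*} [Fintype ι] {H : Matrix n n ℂ} {V : ι → Matrix n n ℂ} {ρss : Matrix n n ℂ}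
    {S : Submodule ℂ (n → ℂ)} (hS : S ≠ ⊥)
    (hinv : ∀ t : ℝ, 0 ≤ t → ∀ ρ : Matrix n n ℂ, IsDensityMatrix ρ →
      matSupport ρ ≤ S → matSupport (evolve H V t ρ) ≤ S)
    (hconv : ∀ ρ₀ : Matrix n n ℂ, IsDensityMatrix ρ₀ →
      Tendsto (fun t : ℝ => evolve H V t ρ₀) atTop (𝓝 ρss)) :
    matSupport ρss ≤ S := by
  obtain ⟨ρ₀, hρ₀, hsupp⟩ := exists_isDensityMatrix_matSupport_le hS
  exact matSupport_le_of_tendsto (hconv ρ₀ hρ₀) <|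
    (eventually_ge_atTop 0).mono fun t ht => hinv t ht ρ₀ hρ₀ hsupp

theorem no_attractive_state_of_orthogonal_invariant_subspaces_general
    (N : ℕ)
    (H : Matrix (Fin N) (Fin N) ℂ)
    {ι : Type*} [Fintype ι] (V : ι → Matrix (Fin N) (Fin N) ℂ)
    (S₁ S₂ : Submodule ℂ (Fin N → ℂ)) (h1 : S₁ ≠ ⊥) (h2 : S₂ ≠ ⊥)
    (horth : ∀ x ∈ S₁, ∀ y ∈ S₂, star x ⬝ᵥ y = 0)
    (hinv1 : ∀ t : ℝ, 0 ≤ t → ∀ ρ : Matrix (Fin N) (Fin N) ℂ, IsDensityMatrix ρ →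
      matSupport ρ ≤ S₁ → matSupport (evolve H V t ρ) ≤ S₁)
    (hinv2 : ∀ t : ℝ, 0 ≤ t → ∀ ρ : Matrix (Fin N) (Fin N) ℂ, IsDensityMatrix ρ →
      matSupport ρ ≤ S₂ → matSupport (evolve H V t ρ) ≤ S₂) :
    ¬ ∃ ρss : Matrix (Fin N) (Fin N) ℂ, IsSteadyState H V ρss ∧
        ∀ ρ₀ : Matrix (Fin N) (Fin N) ℂ, IsDensityMatrix ρ₀ →
          Filter.Tendsto (fun t : ℝ => evolve H V t ρ₀) Filter.atTop (nhds ρss) := by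
  rintro ⟨ρss, ⟨hdensity, -⟩, hconv⟩
  exact hdensity.ne_zero <| eq_zero_of_matSupport_le_of_orthogonal horth
    (matSupport_le_of_tendsto_evolve h1 hinv1 hconv)
    (matSupport_le_of_tendsto_evolve h2 hinv2 hconv)

/-- If there are two nonzero mutually orthogonal subspaces each invariant under the
dynamics, then there is no globally asymptotically stable equilibrium. -/
theorem no_attractive_state_of_orthogonal_invariant_subspaces
    (N : ℕ) (hN : 1 ≤ N)
    (H : Matrix (Fin N) (Fin N) ℂ) (hH : H.IsHermitian)
    {ι : Type*} [Fintype ι] (V : ι → Matrix (Fin N) (Fin N) ℂ)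
    (S₁ S₂ : Submodule ℂ (Fin N → ℂ)) (h1 : S₁ ≠ ⊥) (h2 : S₂ ≠ ⊥)
    (horth : ∀ x ∈ S₁, ∀ y ∈ S₂, star x ⬝ᵥ y = 0)
    (hinv1 : ∀ t : ℝ, 0 ≤ t → ∀ ρ : Matrix (Fin N) (Fin N) ℂ, IsDensityMatrix ρ →
      matSupport ρ ≤ S₁ → matSupport (evolve H V t ρ) ≤ S₁)
    (hinv2 : ∀ t : ℝ, 0 ≤ t → ∀ ρ : Matrix (Fin N) (Fin N) ℂ, IsDensityMatrix ρ →
      matSupport ρ ≤ S₂ → matSupport (evolve H V t ρ) ≤ S₂) :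
    ¬ ∃ ρss : Matrix (Fin N) (Fin N) ℂ, IsSteadyState H V ρss ∧
        ∀ ρ₀ : Matrix (Fin N) (Fin N) ℂ, IsDensityMatrix ρ₀ →
          Filter.Tendsto (fun t : ℝ => evolve H V t ρ₀) Filter.atTop (nhds ρss) :=
  no_attractive_state_of_orthogonal_invariant_subspaces_general N H V S₁ S₂ h1 h2 horth hinv1 hinv2
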